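/- arXiv:2506.12282 — 3 statements merged into one kernel-verified Lean document; each statement's English description precedes it below -/
import Mathlib

section
/- For all integers n ≥ 1 and f with 0 ≤ f < n, in every execution of Algorithm M in which at most f players crash, every non-faulty player decides at the end of round f+1, and its decision value is the input value of some player (validity and termination in f+1 rounds). -/
open Finset

/-- An adversary crashing at most `f` of the `n` players: each crashed player
gets a crash round (`≥ 1`) and, for its crash round, a choice of which of its
messages are delivered. -/
structure Adversary (n f : ℕ) where
  crashRound : Fin n → Option ℕ
  delivered : Fin n → Fin n → Prop
  card_crash_le : (Finset.univ.filter fun p => (crashRound p).isSome).card ≤ f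
  one_le_crash : ∀ p r, crashRound p = some r → 1 ≤ r

namespace Adversary
variable {n f : ℕ}

/-- `p` is alive in round `r`: it does not crash in any round `< r`. -/
def Alive (A : Adversary n f) (p : Fin n) (r : ℕ) : Prop :=
  ∀ r', A.crashRound p = some r' → r ≤ r'

/-- `p` never crashes. -/
def NonFaulty (A : Adversary n f) (p : Fin n) : Prop := A.crashRound p = none

/-- A message that `p` is prescribed to send to `q` in round `r` actually
arrives (provided `q` is awake): `p` must be alive in round `r`, and if `r` is
`p`'s crash round, the adversary must have chosen to deliver this message. -/
def Arrives (A : Adversary n f) (p q : Fin n) (r : ℕ) : Prop :=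
  A.Alive p r ∧ (A.crashRound p = some r → A.delivered p q)

end Adversary

/-- Committee `C d` of the `JoinCommittees a b` assignment on `n` players:
player `i % n` joins committee `C ⌈i/b⌉` for each `1 ≤ i ≤ a * b`, so that
`C d = {i % n : (d-1)*b < i ≤ d*b, i ≤ a*b}`. -/
def committee (n : ℕ) (hn : 0 < n) (a b d : ℕ) : Finset (Fin n) :=
  ((Finset.Ioc ((d - 1) * b) (d * b)).filter fun i => i ≤ a * b).image
    fun i => ⟨i % n, Nat.mod_lt i hn⟩

variable {n : ℕ}

/-- In Algorithm M (with committees `C 1, …, C f` of size `f+1`), `q` is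
prescribed to send its current value to `p` in round `r`. -/
def SendToM (hn : 0 < n) (f : ℕ) (q p : Fin n) (r : ℕ) : Prop :=
  (r = 1 ∧ p ∈ committee n hn f (f + 1) 1) ∨
  (2 ≤ r ∧ r ≤ f ∧ q ∈ committee n hn f (f + 1) (r - 1) ∧
    p ∈ committee n hn f (f + 1) r) ∨
  (r = f + 1 ∧ q ∈ committee n hn f (f + 1) f)

open scoped Classical in
/-- `execM hn f X A r p` is the value of player `p`'s variable `Y` at the end
of round `r` (equivalently, at the start of round `r+1`); `r = 0` gives the
initial state `Y = X p`.  In round `r`, an alive player updates `Y` to the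
maximum of `Y` and all values it receives. -/
noncomputable def execM (hn : 0 < n) (f : ℕ) (X : Fin n → ℤ) (A : Adversary n f) :
    ℕ → Fin n → ℤ
  | 0 => X
  | r + 1 => fun p =>
      if A.Alive p (r + 1) then
        (Finset.univ.filter fun q =>
            SendToM hn f q p (r + 1) ∧ A.Arrives q p (r + 1)).fold
          max (execM hn f X A r p) (execM hn f X A r)
      else execM hn f X A r p

/-- Player `p` decides (at the end of round `f+1`) on the value `v`:
`p` survives all of rounds `1, …, f+1` and its variable `Y` equals `v` then. -/
def DecidesM (hn : 0 < n) (f : ℕ) (X : Fin n → ℤ) (A : Adversary n f)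
    (p : Fin n) (v : ℤ) : Prop :=
  A.Alive p (f + 2) ∧ execM hn f X A (f + 1) p = v

/-- The rounds in which player `p` is prescribed to be awake in Algorithm M. -/
def AwakeM (hn : 0 < n) (f : ℕ) (p : Fin n) (r : ℕ) : Prop :=
  r = 1 ∨ r = f + 1 ∨
    (2 ≤ r ∧ r ≤ f ∧
      (p ∈ committee n hn f (f + 1) (r - 1) ∨ p ∈ committee n hn f (f + 1) r))

open scoped Classical in
/-- The number of rounds in which player `p` is awake in Algorithm M. -/
noncomputable def awakeCountM (hn : 0 < n) (f : ℕ) (p : Fin n) : ℕ :=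
  ((Finset.Icc 1 (f + 1)).filter fun r => AwakeM hn f p r).card

open scoped Classical in
/-- The total number of messages sent in an execution of Algorithm M:
a message is sent for every round `r ∈ [1, f+1]` and every pair `(q, p)` such
that `q` is alive in round `r` and prescribed to send to `p` in round `r`. -/
noncomputable def msgCountM (hn : 0 < n) (f : ℕ) (A : Adversary n f) : ℕ :=
  ∑ r ∈ Finset.Icc 1 (f + 1),
    (Finset.univ.filter fun qp : Fin n × Fin n =>
      A.Alive qp.1 r ∧ SendToM hn f qp.1 qp.2 r).card

/-- For all `n ≥ 1` and `0 ≤ f < n`, in every execution of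
Algorithm M with at most `f` crashes, every non-faulty player decides at the
end of round `f+1`, and its decision value is the input value of some player
(validity and termination in `f+1` rounds). -/
theorem algorithmM_validity_termination (n f : ℕ) (hn : 0 < n) (hf : f < n)
    (X : Fin n → ℤ) (A : Adversary n f) :
    ∀ p : Fin n, A.NonFaulty p →
      ∃ v, DecidesM hn f X A p v ∧ ∃ q, v = X q := by
  classical
  have foldmax : ∀ (s : Finset (Fin n)) (g : Fin n → ℤ) (b : ℤ),
      s.fold max b g = b ∨ ∃ a ∈ s, s.fold max b g = g a := by
    intro s g b
    induction s using Finset.induction_on with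
    | empty => left; simp
    | insert _ _ ha ih =>
      rename_i a s
      rw [Finset.fold_insert ha]
      rcases le_total (g a) (s.fold max b g) with h | h
      · rw [max_eq_right h]
        rcases ih with h' | ⟨c, hc, h'⟩
        · left; exact h'
        · right; exact ⟨c, Finset.mem_insert_of_mem hc, h'⟩
      · right
        exact ⟨a, Finset.mem_insert_self a s, max_eq_left h⟩
  have key : ∀ r (p : Fin n), ∃ q, execM hn f X A r p = X q := by
    intro r
    induction r with
    | zero => intro p; exact ⟨p, rfl⟩
    | succ r ih =>
      intro p
      rw [execM]
      dsimp only
      split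
      · rcases foldmax _ (execM hn f X A r) (execM hn f X A r p) with h | ⟨a, _, h⟩
        · rw [h]; exact ih p
        · rw [h]; exact ih a
      · exact ih p
  intro p hp
  obtain ⟨q, hq⟩ := key (f + 1) p
  refine ⟨X q, ⟨fun r' hr' => ?_, hq⟩, q, rfl⟩
  rw [hp] at hr'
  cases hr'
end

section
/- Let 0 ≤ f < n and consider any execution of Algorithm M with at most f crashed players in which at least one player decides, and let δ be the maximum value decided in that execution. Suppose there exists a round i ∈ {1,…,f+1} and a player p that is awake in round i, does not crash in any of rounds 1,…,i, and in round i sends (as prescribed by the algorithm) a value v_p > δ. Then no player decides on δ. -/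
open Finset

variable {n : ℕ}

lemma alive_mono {n f : ℕ} {A : Adversary n f} {p : Fin n} {r s : ℕ}
    (h : A.Alive p r) (hsr : s ≤ r) : A.Alive p s :=
  fun r' h' => le_trans hsr (h r' h')

lemma nonfaulty_alive {n f : ℕ} {A : Adversary n f} {p : Fin n}
    (h : A.NonFaulty p) (r : ℕ) : A.Alive p r :=
  fun r' h' => by rw [h] at h'; cases h'

lemma committee_card {n : ℕ} (hn : 0 < n) {f d : ℕ} (hf : f < n)
    (hd1 : 1 ≤ d) (hdf : d ≤ f) :
    (committee n hn f (f + 1) d).card = f + 1 := by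
  obtain ⟨e, rfl⟩ : ∃ e, d = e + 1 := ⟨d - 1, by omega⟩
  have hexp : (e + 1) * (f + 1) = e * (f + 1) + (f + 1) := by ring
  unfold committee
  rw [Finset.filter_true_of_mem, Finset.card_image_of_injOn, Nat.card_Ioc]
  · simp only [Nat.add_sub_cancel]
    omega
  · intro a ha b hb hab
    simp only [Finset.coe_filter, Finset.mem_coe, Finset.mem_filter,
      Finset.mem_Ioc, Set.mem_setOf_eq, Nat.add_sub_cancel] at ha hb
    have ha1 := ha.1
    have ha2 := ha.2
    have hb1 := hb.1
    have hb2 := hb.2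
    have h1 : a % n = b % n := by
      have := congrArg Fin.val hab
      simpa using this
    rcases le_total a b with h | h
    · have hd : n ∣ b - a := (Nat.modEq_iff_dvd' h).mp h1
      have hlt : b - a < n := by omega
      have := Nat.eq_zero_of_dvd_of_lt hd hlt
      omega
    · have hd : n ∣ a - b := (Nat.modEq_iff_dvd' h).mp h1.symm
      have hlt : a - b < n := by omega
      have := Nat.eq_zero_of_dvd_of_lt hd hlt
      omega
  · intro x hx
    simp only [Finset.mem_Ioc, Nat.add_sub_cancel] at hx
    calc x ≤ (e + 1) * (f + 1) := hx.2
      _ ≤ f * (f + 1) := Nat.mul_le_mul_right _ (by omega)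

lemma exists_nonfaulty_mem {n f : ℕ} (hn : 0 < n) (hf : f < n) (A : Adversary n f)
    {d : ℕ} (hd1 : 1 ≤ d) (hdf : d ≤ f) :
    ∃ q ∈ committee n hn f (f + 1) d, A.NonFaulty q := by
  by_contra h
  push_neg at h
  have hsub : committee n hn f (f + 1) d ⊆
      Finset.univ.filter fun p => (A.crashRound p).isSome := by
    intro q hq
    simp only [Finset.mem_filter, Finset.mem_univ, true_and]
    have := h q hq
    unfold Adversary.NonFaulty at this
    cases hcr : A.crashRound q with
    | none => exact absurd hcr this
    | some r => simp
  have h1 := Finset.card_le_card hsub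
  rw [committee_card hn hf hd1 hdf] at h1
  have h2 := A.card_crash_le
  omega

lemma recvM {n : ℕ} (hn : 0 < n) (f : ℕ) (X : Fin n → ℤ) (A : Adversary n f)
    {q p : Fin n} {r : ℕ} (hp : A.Alive p (r + 1)) (hq : A.Alive q (r + 2))
    (hs : SendToM hn f q p (r + 1)) :
    execM hn f X A r q ≤ execM hn f X A (r + 1) p := by
  classical
  simp only [execM]
  rw [if_pos hp]
  apply (Finset.le_fold_max _).mpr
  right
  refine ⟨q, ?_, le_rfl⟩
  simp only [Finset.mem_filter, Finset.mem_univ, true_and]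
  refine ⟨hs, alive_mono hq (by omega), fun hcr => ?_⟩
  have := hq _ hcr
  omega

/-- Lemma `nodec`.  Let `0 ≤ f < n` and consider an execution
of Algorithm M with at most `f` crashes in which at least one player decides;
let `δ` be the maximum decided value.  If there is a round `i ∈ [1, f+1]` and a
player `p` that is awake in round `i`, does not crash in rounds `1, …, i`, and
is prescribed to send (to someone) in round `i` a value `v_p > δ` (its `Y` at
the start of round `i`), then no player decides on `δ`. -/
theorem algorithmM_nodec (n f : ℕ) (hn : 0 < n) (hf : f < n)
    (X : Fin n → ℤ) (A : Adversary n f) (δ : ℤ)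
    (hδ_dec : ∃ p, DecidesM hn f X A p δ)
    (hδ_max : ∀ p v, DecidesM hn f X A p v → v ≤ δ)
    (hsend : ∃ i, 1 ≤ i ∧ i ≤ f + 1 ∧
      ∃ p : Fin n, AwakeM hn f p i ∧ A.Alive p (i + 1) ∧
        (∃ q, SendToM hn f p q i) ∧ δ < execM hn f X A (i - 1) p) :
    ∀ p, ¬ DecidesM hn f X A p δ := by
  classical
  obtain ⟨i, hi1, hi2, p, hawake, halive, ⟨q0, hq0⟩, hval⟩ := hsend
  obtain ⟨j, rfl⟩ : ∃ j, i = j + 1 := ⟨i - 1, by omega⟩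
  simp only [Nat.add_sub_cancel] at hval
  obtain ⟨d, hdAlive, hdVal⟩ := hδ_dec
  exfalso
  have key : ∃ s : Fin n, A.Alive s (f + 2) ∧ s ∈ committee n hn f (f + 1) f ∧
      δ < execM hn f X A f s := by
    rcases eq_or_lt_of_le hi2 with heq | hlt
    · -- i = f + 1 : p itself is in C_f and sends in round f+1
      have hj : f = j := by omega
      subst hj
      refine ⟨p, halive, ?_, hval⟩
      rcases hq0 with ⟨h1, hmem⟩ | ⟨h2, h3, _, _⟩ | ⟨_, hmem⟩
      · exfalso
        have hf0 : f = 0 := by omega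
        subst hf0
        simp only [committee, Finset.mem_image, Finset.mem_filter,
          Finset.mem_Ioc] at hmem
        obtain ⟨x, ⟨⟨hx1, hx2⟩, hx3⟩, _⟩ := hmem
        omega
      · omega
      · exact hmem
    · -- i ≤ f : propagate along committees C_i, ..., C_f
      have hif : j + 1 ≤ f := by omega
      have chain : ∀ h, j + 1 ≤ h → h ≤ f →
          ∃ s, A.NonFaulty s ∧ s ∈ committee n hn f (f + 1) h ∧
            δ < execM hn f X A h s := by
        intro h hih
        induction h, hih using Nat.le_induction with
        | base =>
          intro _
          obtain ⟨s, hs_mem, hs_nf⟩ := exists_nonfaulty_mem hn hf A hi1 hif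
          refine ⟨s, hs_nf, hs_mem, ?_⟩
          have hsend' : SendToM hn f p s (j + 1) := by
            rcases hq0 with ⟨h1, _⟩ | ⟨h2, h3, hpc, _⟩ | ⟨h1, _⟩
            · left
              refine ⟨h1, ?_⟩
              rw [h1] at hs_mem
              exact hs_mem
            · exact Or.inr (Or.inl ⟨h2, h3, hpc, hs_mem⟩)
            · omega
          have := recvM hn f X A (nonfaulty_alive hs_nf _) halive hsend'
          exact lt_of_lt_of_le hval this
        | succ h hih IH =>
          intro hhf
          obtain ⟨s, hs_nf, hs_mem, hs_val⟩ := IH (by omega)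
          obtain ⟨t, ht_mem, ht_nf⟩ :=
            exists_nonfaulty_mem hn hf A (show 1 ≤ h + 1 by omega) hhf
          refine ⟨t, ht_nf, ht_mem, ?_⟩
          have hsend' : SendToM hn f s t (h + 1) := by
            refine Or.inr (Or.inl ⟨by omega, hhf, ?_, ht_mem⟩)
            simpa using hs_mem
          have := recvM hn f X A (nonfaulty_alive ht_nf _)
            (nonfaulty_alive hs_nf _) hsend'
          exact lt_of_lt_of_le hs_val this
      obtain ⟨s, hs_nf, hs_mem, hs_val⟩ := chain f hif le_rfl
      exact ⟨s, nonfaulty_alive hs_nf _, hs_mem, hs_val⟩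
  obtain ⟨s, hsAlive, hsMem, hsVal⟩ := key
  have hsend' : SendToM hn f s d (f + 1) := Or.inr (Or.inr ⟨rfl, hsMem⟩)
  have hle := recvM hn f X A (alive_mono hdAlive (by omega)) hsAlive hsend'
  rw [hdVal] at hle
  exact absurd hle (not_le.mpr hsVal)
end

section
/- Let n, a, b be integers with 1 ≤ b ≤ n and a ≥ 1. If i, i' ∈ {1,…,a·b} with i < i' and i ≡ i' (mod n), then ⌈i'/b⌉ − ⌈i/b⌉ ≥ ⌊n/b⌋. In particular, under the committee assignment in which player (i mod n) joins committee C_⌈i/b⌉ for each i ∈ {1,…,a·b}, the indices of any two distinct committees containing a given player differ by at least ⌊n/b⌋. -/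
/-- Let `1 ≤ b ≤ n` and `a ≥ 1`.  If `i, i' ∈ [1, a·b]`
with `i < i'` and `i ≡ i' (mod n)`, then `⌈i'/b⌉ - ⌈i/b⌉ ≥ ⌊n/b⌋`; that is,
under the `JoinCommittees(a, b)` assignment, the indices of any two distinct
committees containing a given player differ by at least `⌊n/b⌋`.  Here
`⌈i/b⌉ = (i + b - 1)/b` is the natural-number ceiling. -/
theorem joinCommittees_spacing (n a b : ℕ) (hb : 1 ≤ b) (hbn : b ≤ n)
    (ha : 1 ≤ a) (i i' : ℕ) (hi : i ∈ Finset.Icc 1 (a * b))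
    (hi' : i' ∈ Finset.Icc 1 (a * b)) (hlt : i < i')
    (hmod : i ≡ i' [MOD n]) :
    n / b ≤ (i' + b - 1) / b - (i + b - 1) / b := by
  have hdvd : n ∣ (i' - i) := (Nat.modEq_iff_dvd' hlt.le).mp hmod
  have hn : n ≤ i' - i := Nat.le_of_dvd (by omega) hdvd
  have h1 : (i + b - 1) / b + n / b ≤ (i + b - 1 + n) / b :=
    Nat.add_div_le_add_div _ _ _
  have h2 : (i + b - 1 + n) / b ≤ (i' + b - 1) / b :=
    Nat.div_le_div_right (by omega)
  omega
end
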